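/- Let H be a graded connected Hopf algebra and D = S ⋆ Y its Dynkin operator. Then for every homogeneous x ∈ H_n with n > 0, D(x) = n·x − m∘(id⊗D)∘Δ'(x), where Δ'(x) = Δ(x) − 1⊗x − x⊗1 is the reduced coproduct. -/

import Mathlib

open scoped TensorProduct

/-- Convolution product of linear endomorphisms of a Hopf algebra:
`φ ⋆ ψ = m ∘ (φ ⊗ ψ) ∘ Δ`. -/
noncomputable def conv {H : Type} [CommRing H] [HopfAlgebra ℚ H]
    (φ ψ : H →ₗ[ℚ] H) : H →ₗ[ℚ] H :=
  LinearMap.mul' ℚ H ∘ₗ TensorProduct.map φ ψ ∘ₗ (Coalgebra.comul (R := ℚ))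

/-- The grading operator `Y`, multiplying a homogeneous element of weight `n` by `n`. -/
noncomputable def gradingOp {H : Type} [CommRing H] [Algebra ℚ H]
    (𝒜 : ℕ → Submodule ℚ H) [GradedAlgebra 𝒜] : H →ₗ[ℚ] H :=
  (DirectSum.toModule ℚ ℕ H fun n => (n : ℚ) • (𝒜 n).subtype) ∘ₗ
    (DirectSum.decomposeLinearEquiv 𝒜).toLinearMap

/-- The Dynkin operator `D = S ⋆ Y`. -/
noncomputable def dynkinOp {H : Type} [CommRing H] [HopfAlgebra ℚ H]
    (𝒜 : ℕ → Submodule ℚ H) [GradedAlgebra 𝒜] : H →ₗ[ℚ] H :=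
  conv (HopfAlgebra.antipode (R := ℚ)) (gradingOp 𝒜)

/-- The operator `Π`, equal to the identity on `H₀` and to `Y⁻¹ ∘ D` on `H_{>0}`:
on a homogeneous element `x` of degree `n > 0` it acts as `x ↦ D(x)/n`. -/
noncomputable def piOp {H : Type} [CommRing H] [HopfAlgebra ℚ H]
    (𝒜 : ℕ → Submodule ℚ H) [GradedAlgebra 𝒜] : H →ₗ[ℚ] H :=
  (DirectSum.toModule ℚ ℕ H fun n =>
      if n = 0 then (𝒜 n).subtype
      else ((n : ℚ)⁻¹ • dynkinOp 𝒜) ∘ₗ (𝒜 n).subtype) ∘ₗ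
    (DirectSum.decomposeLinearEquiv 𝒜).toLinearMap

/-! Convolution is the product of Mathlib's convolution algebra `WithConv (H →ₗ[ℚ] H)`, so
`id ⋆ D = (id ⋆ S) ⋆ Y = Y` by associativity. Evaluating at `x ∈ Hₙ` gives `m(id ⊗ D)Δx = n·x`,
and of the two primitive terms only `1 ⊗ x` contributes, since `D(1) = S(1)·Y(1) = 0`. -/

open TensorProduct WithConv

lemma conv_eq_ofConv_convMul {H : Type} [CommRing H] [HopfAlgebra ℚ H] (φ ψ : H →ₗ[ℚ] H) :
    conv φ ψ = (toConv φ * toConv ψ).ofConv :=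
  rfl

theorem conv_id_conv_antipode {H : Type} [CommRing H] [HopfAlgebra ℚ H] (ψ : H →ₗ[ℚ] H) :
    conv LinearMap.id (conv (HopfAlgebra.antipode ℚ) ψ) = ψ := by
  simp only [conv_eq_ofConv_convMul, toConv_ofConv, ← mul_assoc, LinearMap.id_mul_antipode,
    one_mul, ofConv_toConv]

section Graded

variable {H : Type} [CommRing H] [HopfAlgebra ℚ H] (𝒜 : ℕ → Submodule ℚ H) [GradedAlgebra 𝒜]

theorem gradingOp_of_mem {n : ℕ} {x : H} (hx : x ∈ 𝒜 n) : gradingOp 𝒜 x = (n : ℚ) • x := by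
  simp only [gradingOp, LinearMap.comp_apply, LinearEquiv.coe_coe,
    DirectSum.decomposeLinearEquiv_apply, DirectSum.decompose_of_mem 𝒜 hx,
    ← DirectSum.lof_eq_of ℚ, DirectSum.toModule_lof]
  rfl

theorem gradingOp_one : gradingOp 𝒜 (1 : H) = 0 := by
  simp [gradingOp_of_mem 𝒜 (SetLike.one_mem_graded 𝒜)]

theorem dynkinOp_one : dynkinOp 𝒜 (1 : H) = 0 := by
  simp [dynkinOp, conv, Algebra.TensorProduct.one_def, gradingOp_one]

theorem conv_id_dynkinOp : conv LinearMap.id (dynkinOp 𝒜) = gradingOp 𝒜 :=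
  conv_id_conv_antipode (gradingOp 𝒜)

end Graded

theorem dynkinOp_recursion_general {H : Type} [CommRing H] [HopfAlgebra ℚ H]
    (𝒜 : ℕ → Submodule ℚ H) [GradedAlgebra 𝒜] :
    ∀ n : ℕ, 0 < n → ∀ x ∈ 𝒜 n,
      dynkinOp 𝒜 x = (n : ℚ) • x -
        LinearMap.mul' ℚ H
          (TensorProduct.map LinearMap.id (dynkinOp 𝒜)
            ((Coalgebra.comul (R := ℚ)) x - (1 : H) ⊗ₜ[ℚ] x - x ⊗ₜ[ℚ] (1 : H))) := by
  intro n _ x hx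
  have hmul_comul : LinearMap.mul' ℚ H (map LinearMap.id (dynkinOp 𝒜) (Coalgebra.comul x)) =
      (n : ℚ) • x := by
    rw [← gradingOp_of_mem 𝒜 hx, ← conv_id_dynkinOp 𝒜]
    rfl
  simp only [map_sub, map_tmul, LinearMap.id_apply, hmul_comul, dynkinOp_one, tmul_zero,
    LinearMap.mul'_apply, one_mul, sub_zero, sub_sub_cancel]

/-- The Dynkin operator `D = S ⋆ Y` satisfies the recursion
`D(x) = n·x − m∘(id⊗D)∘Δ'(x)` for homogeneous `x ∈ Hₙ`, `n > 0`, where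
`Δ'(x) = Δ(x) − 1⊗x − x⊗1` is the reduced coproduct. -/
theorem dynkinOp_recursion {H : Type} [CommRing H] [HopfAlgebra ℚ H]
    (𝒜 : ℕ → Submodule ℚ H) [GradedAlgebra 𝒜]
    (hconn : 𝒜 0 = (1 : Submodule ℚ H))
    (hΔ : ∀ n : ℕ, ∀ x ∈ 𝒜 n, (Coalgebra.comul (R := ℚ)) x ∈
      ⨆ (p : ℕ × ℕ) (_ : p.1 + p.2 = n),
        LinearMap.range (TensorProduct.map (𝒜 p.1).subtype (𝒜 p.2).subtype)) :
    ∀ n : ℕ, 0 < n → ∀ x ∈ 𝒜 n,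
      dynkinOp 𝒜 x = (n : ℚ) • x -
        LinearMap.mul' ℚ H
          (TensorProduct.map LinearMap.id (dynkinOp 𝒜)
            ((Coalgebra.comul (R := ℚ)) x - (1 : H) ⊗ₜ[ℚ] x - x ⊗ₜ[ℚ] (1 : H))) :=
  dynkinOp_recursion_general 𝒜
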